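/- If (L,·) is an LC-loop, then for all x,y ∈ L the triple (R_{y²}∘L_x∘L_x, L_y⁻¹∘L_y⁻¹, L_x∘L_x) is an autotopism of L. -/
import Mathlib


theorem stmt {L : Type*} (mul : L → L → L) (e : L)
    (hid : ∀ x, mul e x = x ∧ mul x e = x)
    (hLbij : ∀ a, Function.Bijective (fun x => mul a x))
    (hRbij : ∀ a, Function.Bijective (fun x => mul x a))
    (hLC : ∀ x y z, mul x (mul y (mul y z)) = mul (mul x (mul y y)) z) :
    ∀ x y a b w, mul y (mul y w) = b →
      mul (mul x (mul x (mul a (mul y y)))) w = mul x (mul x (mul a b)) := by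
  -- injectivity of translations
  have hRinj : ∀ b u v, mul u b = mul v b → u = v := fun b u v h => (hRbij b).1 h
  have hLinj : ∀ a u v, mul a u = mul a v → u = v := fun a u v h => (hLbij a).1 h
  -- right and left division
  obtain ⟨rd, hrd⟩ : ∃ rd : L → L → L, ∀ a b, mul (rd a b) b = a :=
    ⟨fun a b => Classical.choose ((hRbij b).2 a),
     fun a b => Classical.choose_spec ((hRbij b).2 a)⟩
  obtain ⟨ld, hld⟩ : ∃ ld : L → L → L, ∀ a b, mul a (ld a b) = b :=
    ⟨fun a b => Classical.choose ((hLbij a).2 b),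
     fun a b => Classical.choose_spec ((hLbij a).2 b)⟩
  have rd_unique : ∀ a b u, mul u b = a → u = rd a b :=
    fun a b u h => hRinj b u (rd a b) (h.trans (hrd a b).symm)
  -- L4 : (e/y)·(y·y) = y
  have L4 : ∀ y, mul (rd e y) (mul y y) = y := by
    intro y
    apply hRinj (ld y e)
    have h1 : mul (mul (rd e y) (mul y y)) (ld y e) = e := by
      rw [← hLC (rd e y) y (ld y e), hld y e, (hid y).2, hrd e y]
    rw [h1, hld y e]
  -- L6 (LIP) : (e/y)·(y·w) = w
  have L6 : ∀ y w, mul (rd e y) (mul y w) = w := by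
    intro y w
    calc mul (rd e y) (mul y w)
        = mul (rd e y) (mul y (mul y (ld y w))) := by rw [hld y w]
      _ = mul (mul (rd e y) (mul y y)) (ld y w) := hLC _ y _
      _ = mul y (ld y w) := by rw [L4]
      _ = w := hld y w
  -- L7 : y·((e/y)·z) = z
  have L7 : ∀ y z, mul y (mul (rd e y) z) = z := by
    intro y z
    apply hLinj (rd e y)
    rw [L6 y (mul (rd e y) z)]
  -- L8a : y·(e/y) = e
  have L8a : ∀ y, mul y (rd e y) = e := by
    intro y
    have h := L7 y e
    rwa [(hid (rd e y)).2] at h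
  -- L8b : e/(e/y) = y
  have L8b : ∀ y, rd e (rd e y) = y := fun y => (rd_unique e (rd e y) y (L8a y)).symm
  -- L9 : (u/(y·(y·z)))·(y·y) = u/z
  have L9 : ∀ u y z, mul (rd u (mul y (mul y z))) (mul y y) = rd u z := by
    intro u y z
    apply rd_unique
    rw [← hLC (rd u (mul y (mul y z))) y z, hrd]
  -- L10 : (x·(x·z))·(e/z) = x·x
  have L10 : ∀ x z, mul (mul x (mul x z)) (rd e z) = mul x x := by
    intro x z
    have h7 := L7 (mul x (mul x z)) (mul x x)
    rwa [L9 e x z] at h7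
  -- L11 : (x·(x·(e/t)))·t = x·x
  have L11 : ∀ x t, mul (mul x (mul x (rd e t))) t = mul x x := by
    intro x t
    have h := L10 x (rd e t)
    rwa [L8b] at h
  -- L12 : (u/(y·u))·(y·y) = y
  have L12 : ∀ u y, mul (rd u (mul y u)) (mul y y) = y := by
    intro u y
    have h9 := L9 u y (mul (rd e y) u)
    rw [L7 y u] at h9
    rw [h9]
    exact (rd_unique u (mul (rd e y) u) y (L7 y u)).symm
  -- L13 : e/(u/(y·u)) = y
  have L13 : ∀ u y, rd e (rd u (mul y u)) = y := by
    intro u y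
    apply hRinj y
    have h : mul (rd e (rd u (mul y u))) (mul (rd u (mul y u)) (mul y y)) = mul y y :=
      L6 (rd u (mul y u)) (mul y y)
    rwa [L12 u y] at h
  -- L14 : (u/(y·u))·(y·z) = z
  have L14 : ∀ u y z, mul (rd u (mul y u)) (mul y z) = z := by
    intro u y z
    have h := L7 (rd u (mul y u)) z
    rwa [L13 u y] at h
  -- L15 : (u/((p/w)·u))·p = w
  have L15 : ∀ u p w, mul (rd u (mul (rd p w) u)) p = w := by
    intro u p w
    have h := L14 u (rd p w) w
    rwa [hrd p w] at h
  -- L16 : ((x·x)/(U/Z))·U = x·(x·Z)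
  have L16 : ∀ x U Z, mul (rd (mul x x) (rd U Z)) U = mul x (mul x Z) := by
    intro x U Z
    have h := L15 (mul x x) U (mul x (mul x Z))
    rwa [L9 U x Z] at h
  -- L17 (LC2) : (x·(x·c))·w = x·(x·(c·w))
  have L17 : ∀ x c w, mul (mul x (mul x c)) w = mul x (mul x (mul c w)) := by
    intro x c w
    have h13 : rd e (rd w (mul c w)) = c := L13 w c
    have h11 : mul (mul x (mul x (rd e (rd w (mul c w))))) (rd w (mul c w)) = mul x x :=
      L11 x (rd w (mul c w))
    rw [h13] at h11
    have hx : mul x (mul x c) = rd (mul x x) (rd w (mul c w)) :=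
      rd_unique (mul x x) (rd w (mul c w)) _ h11
    have h16 := L16 x w (mul c w)
    rwa [← hx] at h16
  -- main statement
  intro x y a b w hb
  have hab : mul a b = mul (mul a (mul y y)) w := by rw [← hb]; exact hLC a y w
  rw [hab]
  exact L17 x (mul a (mul y y)) w
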